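/- arXiv:1608.04422 — 4 statements merged into one kernel-verified Lean document; each statement's English description precedes it below -/
import Mathlib

section
/- Let L be a real m×n matrix, b ∈ ℝ^m, M a real k×n matrix, and d ∈ ℝ^k. Suppose the system of inequalities L x ≤ b has a solution. Then every x ∈ ℝ^n satisfying L x ≤ b also satisfies M x ≤ d if and only if there exists a real k×m matrix G with all entries nonnegative such that G L = M and G b ≤ d (all inequalities between vectors are entrywise). -/
/-!
Homogenize: for a feasible system `L x ≤ b`, the implication `L x ≤ b → c ⬝ᵥ x ≤ δ` says exactly
that the linear form `(x, t) ↦ δ t - c ⬝ᵥ x` is nonnegative on the cone `L x ≤ t b, t ≥ 0`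
(a feasible point `x₀` reaches the boundary `t = 0` as the limit of `(x + ε x₀, t + ε)`).
Farkas' lemma for finitely many linear forms on an arbitrary vector space then writes this form
as a nonnegative combination of the forms `t b i - L i ⬝ᵥ x` and `t`, and the coefficients of a
combination for each row of `M` are the rows of `G`.
-/

open Matrix

namespace Module.Dual

section Field

variable {𝕜 V : Type*} [Field 𝕜] [AddCommGroup V] [Module 𝕜 V]

def projAlong (φ : Module.Dual 𝕜 V) (x : V) : V →ₗ[𝕜] V :=
  LinearMap.id - (φ x)⁻¹ • φ.smulRight x

@[simp]
lemma projAlong_apply (φ : Module.Dual 𝕜 V) (x z : V) :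
    φ.projAlong x z = z - ((φ x)⁻¹ * φ z) • x := by
  simp [projAlong, mul_smul]

lemma apply_projAlong_self {φ : Module.Dual 𝕜 V} {x : V} (hx : φ x ≠ 0) (z : V) :
    φ (φ.projAlong x z) = 0 := by
  simp [field]

lemma eq_smul_of_comp_projAlong_eq_zero {φ f : Module.Dual 𝕜 V} {x : V}
    (hf : f ∘ₗ φ.projAlong x = 0) : f = (f x / φ x) • φ := by
  ext z
  have hz := LinearMap.congr_fun hf z
  simp only [LinearMap.comp_apply, projAlong_apply, map_sub, map_smul, smul_eq_mul,
    LinearMap.zero_apply] at hz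
  simp only [LinearMap.smul_apply, smul_eq_mul]
  linear_combination hz

end Field

variable {𝕜 V ι : Type*} [Field 𝕜] [LinearOrder 𝕜] [IsStrictOrderedRing 𝕜]
  [AddCommGroup V] [Module 𝕜 V]

theorem exists_nonneg_sum_smul_eq_of_forall_nonneg (s : Finset ι) (a : ι → Module.Dual 𝕜 V)
    (b : Module.Dual 𝕜 V) (h : ∀ x, (∀ i ∈ s, 0 ≤ a i x) → 0 ≤ b x) :
    ∃ y : ι → 𝕜, (∀ i ∈ s, 0 ≤ y i) ∧ ∑ i ∈ s, y i • a i = b := by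
  classical
  induction s using Finset.induction_on generalizing a b with
  | empty =>
    refine ⟨0, by simp, ?_⟩
    ext x
    have hx := h x (by simp)
    have hnx := h (-x) (by simp)
    rw [map_neg] at hnx
    simp only [Finset.sum_empty, LinearMap.zero_apply]
    linarith
  | insert j s hj ih =>
    suffices ∃ μ : 𝕜, ∃ y : ι → 𝕜,
        0 ≤ μ ∧ (∀ i ∈ s, 0 ≤ y i) ∧ μ • a j + ∑ i ∈ s, y i • a i = b by
      obtain ⟨μ, y, hμ, hy, hb⟩ := this
      have hupd : ∀ i ∈ s, Function.update y j μ i = y i := fun i hi =>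
        Function.update_of_ne (ne_of_mem_of_not_mem hi hj) _ _
      refine ⟨Function.update y j μ, ?_, ?_⟩
      · simp only [Finset.forall_mem_insert, Function.update_self]
        exact ⟨hμ, fun i hi => hupd i hi ▸ hy i hi⟩
      · rw [Finset.sum_insert hj, Function.update_self,
          Finset.sum_congr rfl fun i hi => by rw [hupd i hi], hb]
    by_cases hs : ∀ x, (∀ i ∈ s, 0 ≤ a i x) → 0 ≤ b x
    · obtain ⟨y, hy, hb⟩ := ih a b hs
      exact ⟨0, y, le_rfl, hy, by rw [zero_smul, zero_add, hb]⟩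
    push Not at hs
    obtain ⟨x, hax, hbx⟩ := hs
    have hajx : a j x < 0 := by
      by_contra! hajx
      exact (h x (Finset.forall_mem_insert _ _ _ |>.2 ⟨hajx, hax⟩)).not_gt hbx
    -- On `ker (a j)` the constraint `a j ≥ 0` is void, so after composing every form with the
    -- projection onto `ker (a j)` along `x` the induction hypothesis applies.
    set p := (a j).projAlong x
    obtain ⟨y, hy, hyb⟩ := ih (fun i => a i ∘ₗ p) (b ∘ₗ p) fun z hz =>
      h (p z) (Finset.forall_mem_insert _ _ _ |>.2 ⟨(apply_projAlong_self hajx.ne z).ge, hz⟩)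
    set σ := ∑ i ∈ s, y i • a i
    have hσx : 0 ≤ σ x := by
      simp only [σ, LinearMap.sum_apply, LinearMap.smul_apply, smul_eq_mul]
      exact Finset.sum_nonneg fun i hi => mul_nonneg (hy i hi) (hax i hi)
    have hp : (b - σ) ∘ₗ p = 0 := by
      ext z
      simpa [σ, LinearMap.sum_apply, sub_eq_zero] using (LinearMap.congr_fun hyb z).symm
    refine ⟨(b - σ) x / a j x, y, ?_, hy, ?_⟩
    · exact div_nonneg_of_nonpos (by rw [LinearMap.sub_apply]; linarith) hajx.le
    · rw [← eq_smul_of_comp_projAlong_eq_zero hp, sub_add_cancel]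

end Module.Dual

section Homogenization

variable {𝕜 m n : Type*} [Fintype n]

def homogenizedForm [CommRing 𝕜] (w : n → 𝕜) (β : 𝕜) : Module.Dual 𝕜 ((n → 𝕜) × 𝕜) :=
  β • LinearMap.snd 𝕜 (n → 𝕜) 𝕜 - dotProductBilin 𝕜 𝕜 w ∘ₗ LinearMap.fst 𝕜 (n → 𝕜) 𝕜

@[simp]
lemma homogenizedForm_apply [CommRing 𝕜] (w : n → 𝕜) (β : 𝕜) (v : (n → 𝕜) × 𝕜) :
    homogenizedForm w β v = β * v.2 - w ⬝ᵥ v.1 :=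
  rfl

variable [Field 𝕜] [LinearOrder 𝕜] [IsStrictOrderedRing 𝕜]

lemma nonpos_of_forall_pos_le_mul {a K : 𝕜} (h : ∀ ε > 0, a ≤ ε * K) : a ≤ 0 := by
  by_contra! ha
  have hK : 0 < K := pos_of_mul_pos_right (ha.trans_le (h 1 one_pos)) zero_le_one
  have hε := h (a / (2 * K)) (by positivity)
  rw [div_mul_eq_mul_div, mul_div_mul_right _ _ hK.ne'] at hε
  linarith

lemma dotProduct_le_mul_of_mulVec_le_smul_of_pos {L : Matrix m n 𝕜} {b : m → 𝕜} {c : n → 𝕜}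
    {δ : 𝕜} (h : ∀ x, L *ᵥ x ≤ b → c ⬝ᵥ x ≤ δ) {x : n → 𝕜} {t : 𝕜} (ht : 0 < t)
    (hx : L *ᵥ x ≤ t • b) : c ⬝ᵥ x ≤ t * δ := by
  have hδ := h (t⁻¹ • x) fun i => by
    simpa [mulVec_smul, inv_mul_le_iff₀ ht] using hx i
  rwa [dotProduct_smul, smul_eq_mul, inv_mul_le_iff₀ ht] at hδ

lemma dotProduct_le_mul_of_mulVec_le_smul {L : Matrix m n 𝕜} {b : m → 𝕜} {c : n → 𝕜} {δ : 𝕜}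
    (hfeas : ∃ x, L *ᵥ x ≤ b) (h : ∀ x, L *ᵥ x ≤ b → c ⬝ᵥ x ≤ δ) {x : n → 𝕜} {t : 𝕜}
    (ht : 0 ≤ t) (hx : L *ᵥ x ≤ t • b) : c ⬝ᵥ x ≤ t * δ := by
  obtain ⟨x₀, hx₀⟩ := hfeas
  have hε : ∀ ε > 0, c ⬝ᵥ x - t * δ ≤ ε * (δ - c ⬝ᵥ x₀) := fun ε hε => by
    have hxε := dotProduct_le_mul_of_mulVec_le_smul_of_pos h (add_pos_of_nonneg_of_pos ht hε)
      (x := x + ε • x₀) fun i => by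
        have h₁ := hx i
        have h₂ := mul_le_mul_of_nonneg_left (hx₀ i) hε.le
        simp only [mulVec_add, mulVec_smul, Pi.add_apply, Pi.smul_apply, smul_eq_mul] at h₁ h₂ ⊢
        linarith
    simp only [dotProduct_add, dotProduct_smul, smul_eq_mul] at hxε
    linarith
  linarith [nonpos_of_forall_pos_le_mul hε]

theorem exists_nonneg_vecMul_eq_of_forall_dotProduct_le [Fintype m] (L : Matrix m n 𝕜)
    (b : m → 𝕜) (hfeas : ∃ x, L *ᵥ x ≤ b) (c : n → 𝕜) (δ : 𝕜)
    (h : ∀ x, L *ᵥ x ≤ b → c ⬝ᵥ x ≤ δ) :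
    ∃ y : m → 𝕜, 0 ≤ y ∧ y ᵥ* L = c ∧ y ⬝ᵥ b ≤ δ := by
  classical
  obtain ⟨y, hy, hyb⟩ := Module.Dual.exists_nonneg_sum_smul_eq_of_forall_nonneg Finset.univ
    (fun o : Option m => o.elim (LinearMap.snd 𝕜 (n → 𝕜) 𝕜) fun i => homogenizedForm (L i) (b i))
    (homogenizedForm c δ) fun ⟨x, t⟩ hv => by
      have ht : 0 ≤ t := hv none (Finset.mem_univ _)
      have hLx : L *ᵥ x ≤ t • b := fun i => by
        have hi := hv (some i) (Finset.mem_univ _)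
        simp only [Option.elim_some, homogenizedForm_apply] at hi
        change L i ⬝ᵥ x ≤ t * b i
        linarith
      have hcx := dotProduct_le_mul_of_mulVec_le_smul hfeas h ht hLx
      simp only [homogenizedForm_apply]
      linarith
  simp only [Fintype.sum_option, Option.elim_none, Option.elim_some] at hyb
  refine ⟨fun i => y (some i), fun i => hy _ (Finset.mem_univ _), ?_, ?_⟩
  · ext j
    simpa [LinearMap.sum_apply, vecMul, dotProduct, Pi.single_apply] using
      LinearMap.congr_fun hyb (Pi.single j 1, 0)
  · have hδ := LinearMap.congr_fun hyb (0, 1)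
    simp only [LinearMap.add_apply, LinearMap.smul_apply, LinearMap.snd_apply, smul_eq_mul,
      mul_one, LinearMap.sum_apply, homogenizedForm_apply, dotProduct, Pi.zero_apply, mul_zero,
      Finset.sum_const_zero, sub_zero] at hδ
    simp only [dotProduct]
    linarith [hy none (Finset.mem_univ _)]

end Homogenization

/-- Farkas' lemma (Lemma 1 of the paper): if the system `L x ≤ b` has a solution,
then every solution of `L x ≤ b` satisfies `M x ≤ d` if and only if there exists a
nonnegative matrix `G` with `G L = M` and `G b ≤ d`. Inequalities between vectors
are entrywise. -/
theorem farkas_implication_iff_nonneg_multiplier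
    (m n k : ℕ) (L : Matrix (Fin m) (Fin n) ℝ) (b : Fin m → ℝ)
    (M : Matrix (Fin k) (Fin n) ℝ) (d : Fin k → ℝ)
    (hfeas : ∃ x : Fin n → ℝ, L.mulVec x ≤ b) :
    (∀ x : Fin n → ℝ, L.mulVec x ≤ b → M.mulVec x ≤ d) ↔
      ∃ G : Matrix (Fin k) (Fin m) ℝ,
        (∀ i j, 0 ≤ G i j) ∧ G * L = M ∧ G.mulVec b ≤ d := by
  constructor
  · intro h
    choose G hG hGL hGb using fun r => exists_nonneg_vecMul_eq_of_forall_dotProduct_le L b hfeas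
      (M r) (d r) fun x hx => h x hx r
    exact ⟨G, hG, ext fun r j => congrFun (hGL r) j, hGb⟩
  · rintro ⟨G, hG, rfl, hGb⟩ x hx r
    calc ((G * L) *ᵥ x) r = G r ⬝ᵥ (L *ᵥ x) := by rw [← mulVec_mulVec]; rfl
      _ ≤ G r ⬝ᵥ b := dotProduct_le_dotProduct_of_nonneg_left hx (hG r)
      _ ≤ d r := hGb r
end

section
/- Let F be a real p×m matrix, H ∈ ℝ^p, and let P₀ = {U ∈ ℝ^m : F U ≤ H} be nonempty. Let F' be a real q×m matrix, H' ∈ ℝ^q, and P = {U ∈ ℝ^m : F' U ≤ H'}. Suppose (s*, r*, G*) with s* > 0 and G* a q×p matrix with nonnegative entries satisfies G* F = F', G* H ≤ s* H' + F' r*, and s* ≤ s for every (s, r, G) with s > 0, G having nonnegative entries, G F = F', and G H ≤ s H' + F' r. Then β* = 1/s* and t* = −r*/s* satisfy β* P₀ + t* ⊆ P, and β* ≥ β for every scalar β > 0 and vector t ∈ ℝ^m with β P₀ + t ⊆ P. In other words, the optimal solution of the linear program yields the maximum inner homothetic approximation of P by P₀. -/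
/-!
If `G ≥ 0`, `G F = F'` and `G H ≤ s H' + F' r`, then `F ξ ≤ H` gives
`F' (ξ - r) = G (F ξ) - F' r ≤ G H - F' r ≤ s H'`, so `s⁻¹ (ξ - r)` lies in `P`.
Conversely, `β P₀ + t ⊆ P` says that each inequality `F'ᵢ U ≤ (H'ᵢ - (F' t)ᵢ) / β` is valid on the
nonempty polyhedron `P₀`. By the affine Farkas lemma it is then a nonnegative combination `gᵢ` of
the inequalities `F U ≤ H`, weakened, and the rows `gᵢ` make `(1/β, -t/β, G)` feasible, whence
`s* ≤ 1/β`. Farkas' lemma itself comes from separating a point from a finitely generated cone,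
which is closed by Carathéodory's theorem for cones.
-/

open Finset

section ConicCombination

variable {ι E : Type*} [AddCommGroup E] [Module ℝ E] {v : ι → E}

lemma exists_sum_smul_eq_zero_pos_of_not_linearIndepOn {s : Finset ι}
    (hv : ¬LinearIndepOn ℝ v s) : ∃ f : ι → ℝ, ∑ i ∈ s, f i • v i = 0 ∧ ∃ j ∈ s, 0 < f j := by
  obtain ⟨f, hf, j, hj, hfj⟩ := not_linearIndepOn_finset_iff.1 hv
  rcases hfj.lt_or_gt with hneg | hpos
  · exact ⟨-f, by simp [neg_smul, hf], j, hj, by simpa using hneg⟩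
  · exact ⟨f, hf, j, hj, hpos⟩

/-- Along a linear dependence `f` with a positive entry, `g - τ f` with
`τ = min_{f i > 0} g i / f i` stays nonnegative and vanishes at a minimizer `k`. -/
lemma exists_erase_nonneg_sum_eq_of_not_linearIndepOn [DecidableEq ι] {s : Finset ι}
    {g : ι → ℝ} (hg : ∀ i ∈ s, 0 ≤ g i) (hv : ¬LinearIndepOn ℝ v s) :
    ∃ k ∈ s, ∃ g' : ι → ℝ, (∀ i ∈ s.erase k, 0 ≤ g' i) ∧
      ∑ i ∈ s.erase k, g' i • v i = ∑ i ∈ s, g i • v i := by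
  obtain ⟨f, hf, j, hj, hfj⟩ := exists_sum_smul_eq_zero_pos_of_not_linearIndepOn hv
  obtain ⟨k, hk, hmin⟩ := (s.filter (0 < f ·)).exists_min_image (fun i => g i / f i)
    ⟨j, mem_filter.2 ⟨hj, hfj⟩⟩
  rw [mem_filter] at hk
  set τ := g k / f k
  have hτ : 0 ≤ τ := div_nonneg (hg k hk.1) hk.2.le
  refine ⟨k, hk.1, fun i => g i - τ * f i, fun i hi => ?_, ?_⟩
  · have hi := mem_of_mem_erase hi
    rcases lt_or_ge 0 (f i) with hfi | hfi
    · have := (le_div_iff₀ hfi).1 (hmin i (mem_filter.2 ⟨hi, hfi⟩))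
      linarith
    · nlinarith [hg i hi]
  · rw [sum_erase _ (by simp [τ, div_mul_cancel₀ _ hk.2.ne'])]
    simp only [sub_smul, sum_sub_distrib, mul_smul, ← smul_sum, hf, smul_zero, sub_zero]

theorem exists_linearIndepOn_nonneg_sum_eq (s : Finset ι) {g : ι → ℝ} (hg : ∀ i ∈ s, 0 ≤ g i) :
    ∃ t ⊆ s, LinearIndepOn ℝ v t ∧ ∃ c : ι → ℝ, (∀ i ∈ t, 0 ≤ c i) ∧
      ∑ i ∈ t, c i • v i = ∑ i ∈ s, g i • v i := by
  classical
  induction s using Finset.strongInduction generalizing g with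
  | H s ih =>
    by_cases hv : LinearIndepOn ℝ v s
    · exact ⟨s, subset_rfl, hv, g, hg, rfl⟩
    obtain ⟨k, hk, g', hg', hsum⟩ := exists_erase_nonneg_sum_eq_of_not_linearIndepOn hg hv
    obtain ⟨t, hts, ht, c, hc, hct⟩ := ih _ (erase_ssubset hk) hg'
    exact ⟨t, hts.trans (erase_subset k s), ht, c, hc, hct.trans hsum⟩

lemma PointedCone.mem_hull_range_iff [Fintype ι] {x : E} :
    x ∈ PointedCone.hull ℝ (Set.range v) ↔ ∃ g : ι → ℝ, 0 ≤ g ∧ ∑ i, g i • v i = x := by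
  rw [Submodule.mem_span_range_iff_exists_fun]
  constructor
  · rintro ⟨c, rfl⟩
    exact ⟨fun i => c i, fun i => (c i).2, rfl⟩
  · rintro ⟨g, hg, rfl⟩
    exact ⟨fun i => ⟨g i, hg i⟩, rfl⟩

end ConicCombination

section ClosedCone

variable {ι E : Type*} [AddCommGroup E] [Module ℝ E] [TopologicalSpace E]
  [IsTopologicalAddGroup E] [ContinuousSMul ℝ E] [T2Space E] {v : ι → E}

lemma LinearIndepOn.isClosed_setOf_nonneg_sum_eq {t : Finset ι} (ht : LinearIndepOn ℝ v t) :
    IsClosed {x | ∃ c : ι → ℝ, (∀ i ∈ t, 0 ≤ c i) ∧ ∑ i ∈ t, c i • v i = x} := by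
  classical
  set L := Fintype.linearCombination ℝ (fun i : t => v i)
  have hL : LinearMap.ker L = ⊥ :=
    LinearMap.ker_eq_bot.2 (LinearIndependent.fintypeLinearCombination_injective ht)
  have hset : {x | ∃ c : ι → ℝ, (∀ i ∈ t, 0 ≤ c i) ∧ ∑ i ∈ t, c i • v i = x} =
      L '' {c | 0 ≤ c} := by
    ext x
    simp only [Set.mem_ofPred_eq, Set.mem_image, L, Fintype.linearCombination_apply]
    constructor
    · rintro ⟨c, hc, rfl⟩
      exact ⟨fun i => c i, fun i => hc i i.2, sum_coe_sort t fun i => c i • v i⟩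
    · rintro ⟨c, hc, rfl⟩
      refine ⟨fun i => if h : i ∈ t then c ⟨i, h⟩ else 0,
        fun i hi => (dif_pos hi).trans_ge (hc _), ?_⟩
      rw [← sum_coe_sort t]
      simp
  rw [hset]
  exact (LinearMap.isClosedEmbedding_of_injective hL).isClosedMap _ isClosed_Ici

theorem PointedCone.isClosed_hull_range [Finite ι] :
    IsClosed (PointedCone.hull ℝ (Set.range v) : Set E) := by
  classical
  have := Fintype.ofFinite ι
  have hunion : (PointedCone.hull ℝ (Set.range v) : Set E) =
      ⋃ t ∈ {t : Finset ι | LinearIndepOn ℝ v t},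
        {x | ∃ c : ι → ℝ, (∀ i ∈ t, 0 ≤ c i) ∧ ∑ i ∈ t, c i • v i = x} := by
    ext x
    simp only [SetLike.mem_coe, mem_hull_range_iff, Set.mem_iUnion, Set.mem_ofPred_eq,
      exists_prop]
    constructor
    · rintro ⟨g, hg, rfl⟩
      obtain ⟨t, -, ht, c, hc, hct⟩ :=
        exists_linearIndepOn_nonneg_sum_eq (v := v) univ fun i _ => hg i
      exact ⟨t, ht, c, hc, hct⟩
    · rintro ⟨t, -, c, hc, rfl⟩
      refine ⟨fun i => if i ∈ t then c i else 0, fun i => ?_, by simp [ite_smul]⟩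
      by_cases hi : i ∈ t <;> simp [hi, hc]
  rw [hunion]
  exact (Set.toFinite _).isClosed_biUnion fun t ht => ht.isClosed_setOf_nonneg_sum_eq

variable (v) in
theorem exists_nonneg_sum_eq_or_exists_strongDual_separating [LocallyConvexSpace ℝ E]
    [Fintype ι] (b : E) :
    (∃ g : ι → ℝ, 0 ≤ g ∧ ∑ i, g i • v i = b) ∨
      ∃ f : StrongDual ℝ E, (∀ i, 0 ≤ f (v i)) ∧ f b < 0 := by
  by_cases hb : b ∈ PointedCone.hull ℝ (Set.range v)
  · exact .inl (PointedCone.mem_hull_range_iff.1 hb)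
  · obtain ⟨f, hf, hfb⟩ :=
      ProperCone.hyperplane_separation_point ⟨_, PointedCone.isClosed_hull_range (v := v)⟩ hb
    exact .inr ⟨f, fun i => hf _ (PointedCone.subset_hull ⟨i, rfl⟩), hfb⟩

end ClosedCone

namespace Matrix

variable {ι κ n : Type*} [Fintype n]

theorem exists_nonneg_vecMul_eq_or_exists_mulVec_nonneg [Fintype κ] (A : Matrix κ n ℝ)
    (b : n → ℝ) :
    (∃ g : κ → ℝ, 0 ≤ g ∧ g ᵥ* A = b) ∨ ∃ y : n → ℝ, 0 ≤ A *ᵥ y ∧ b ⬝ᵥ y < 0 := by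
  classical
  refine (exists_nonneg_sum_eq_or_exists_strongDual_separating A b).imp
    (fun ⟨g, hg, hgb⟩ => ⟨g, hg, by rw [vecMul_eq_sum, ← hgb]⟩) fun ⟨f, hf, hfb⟩ => ?_
  set y : n → ℝ := fun j => f (Pi.single j 1)
  have hfy : ∀ w, f w = w ⬝ᵥ y := fun w => by
    simp only [y, dotProduct, ← smul_eq_mul, ← map_smul, ← map_sum]
    congr 1
    ext i
    simp [Pi.single_apply]
  exact ⟨y, fun k => (hf k).trans_eq (hfy _), (hfy b).symm.trans_lt hfb⟩

variable {F : Matrix κ n ℝ} {H : κ → ℝ}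

/-- `(s + t)⁻¹ • (W + t • U₀)` lies in the polyhedron for every `t > 0`; then let `t → 0`. -/
lemma dotProduct_le_mul_of_mulVec_le_smul {c : n → ℝ} {d : ℝ} (hne : ∃ U, F *ᵥ U ≤ H)
    (h : ∀ U, F *ᵥ U ≤ H → c ⬝ᵥ U ≤ d) {W : n → ℝ} {s : ℝ} (hs : 0 ≤ s)
    (hW : F *ᵥ W ≤ s • H) : c ⬝ᵥ W ≤ s * d := by
  obtain ⟨U₀, hU₀⟩ := hne
  have hbound : ∀ t > 0, c ⬝ᵥ W + t * c ⬝ᵥ U₀ ≤ (s + t) * d := fun t ht => by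
    have hst : 0 < s + t := by positivity
    have hfeas : F *ᵥ ((s + t)⁻¹ • (W + t • U₀)) ≤ H := by
      rw [mulVec_smul, mulVec_add, mulVec_smul, inv_smul_le_iff_of_pos hst, add_smul]
      exact add_le_add hW (smul_le_smul_of_nonneg_left hU₀ ht.le)
    have := h _ hfeas
    rwa [dotProduct_smul, dotProduct_add, dotProduct_smul, smul_eq_mul, smul_eq_mul,
      inv_mul_le_iff₀ hst] at this
  by_contra! hlt
  obtain ⟨t, ht, htd⟩ := exists_pos_mul_lt (sub_pos.2 hlt) (d - c ⬝ᵥ U₀)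
  nlinarith [hbound t ht]

theorem exists_nonneg_vecMul_eq_dotProduct_le [Fintype κ] {c : n → ℝ} {d : ℝ}
    (hne : ∃ U, F *ᵥ U ≤ H) (h : ∀ U, F *ᵥ U ≤ H → c ⬝ᵥ U ≤ d) :
    ∃ g : κ → ℝ, 0 ≤ g ∧ g ᵥ* F = c ∧ g ⬝ᵥ H ≤ d := by
  -- rows `(F k, H k)` and `(0, 1)`, target `(c, d)`
  rcases exists_nonneg_vecMul_eq_or_exists_mulVec_nonneg
      (fromBlocks F (replicateCol Unit H) 0 (1 : Matrix Unit Unit ℝ)) (Sum.elim c fun _ => d) with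
    ⟨g, hg, hgb⟩ | ⟨y, hy, hyb⟩
  · refine ⟨g ∘ Sum.inl, fun k => hg _, ?_, ?_⟩
    · simpa [vecMul_fromBlocks] using congrArg (· ∘ Sum.inl) hgb
    · have hd : (g ∘ Sum.inl ᵥ* replicateCol Unit H) () + g (Sum.inr ()) = d := by
        simpa [vecMul_fromBlocks] using congrFun hgb (Sum.inr ())
      exact le_of_add_le_of_nonneg_left hd.le (hg (Sum.inr ()))
  · exfalso
    set u := y ∘ Sum.inl
    set lam := y (Sum.inr ())
    have hlam : 0 ≤ lam := by simpa [fromBlocks_mulVec] using hy (Sum.inr ())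
    have hu : F *ᵥ -u ≤ lam • H := fun k => by
      have hcol : (replicateCol Unit H *ᵥ (y ∘ Sum.inr)) k = lam * H k := by
        simp [mulVec, dotProduct, lam, mul_comm]
      have := hy (Sum.inl k)
      simp only [fromBlocks_mulVec, Pi.zero_apply, Sum.elim_inl, Pi.add_apply, hcol] at this
      simp only [mulVec_neg, Pi.neg_apply, Pi.smul_apply, smul_eq_mul]
      linarith
    have hcu : c ⬝ᵥ u + d * lam < 0 := by
      rw [← Sum.elim_comp_inl_inr y, sumElim_dotProduct_sumElim] at hyb
      simpa using hyb
    have := dotProduct_le_mul_of_mulVec_le_smul hne h hlam hu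
    rw [dotProduct_neg] at this
    linarith

variable [Fintype κ] {F' : Matrix ι n ℝ} {H' : ι → ℝ}

theorem image_smul_add_subset_of_certificate {s : ℝ} {r : n → ℝ} {G : Matrix ι κ ℝ}
    (hs : 0 < s) (hG : ∀ i j, 0 ≤ G i j) (heq : G * F = F')
    (hineq : G *ᵥ H ≤ s • H' + F' *ᵥ r) :
    (fun ξ => (1 / s) • ξ + (-(1 / s) • r)) '' {U | F *ᵥ U ≤ H} ⊆ {U | F' *ᵥ U ≤ H'} := by
  rintro _ ⟨U, hU, rfl⟩ i
  have hF'U : (F' *ᵥ U) i ≤ s * H' i + (F' *ᵥ r) i := calc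
    (F' *ᵥ U) i = G i ⬝ᵥ (F *ᵥ U) := by rw [← heq, ← mulVec_mulVec]; rfl
    _ ≤ G i ⬝ᵥ H := dotProduct_le_dotProduct_of_nonneg_left hU (hG i)
    _ ≤ s * H' i + (F' *ᵥ r) i := hineq i
  simp only [mulVec_add, mulVec_smul, Pi.add_apply, Pi.smul_apply, smul_eq_mul]
  rw [← sub_nonneg]
  have : H' i - (1 / s * (F' *ᵥ U) i + -(1 / s) * (F' *ᵥ r) i) =
      (1 / s) * (s * H' i + (F' *ᵥ r) i - (F' *ᵥ U) i) := by field_simp; ring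
  rw [this]
  exact mul_nonneg (by positivity) (sub_nonneg.2 hF'U)

theorem exists_certificate_of_image_smul_add_subset (hne : ∃ U, F *ᵥ U ≤ H) {β : ℝ}
    {t : n → ℝ} (hβ : 0 < β)
    (hsub : (fun ξ => β • ξ + t) '' {U | F *ᵥ U ≤ H} ⊆ {U | F' *ᵥ U ≤ H'}) :
    ∃ G : Matrix ι κ ℝ, (∀ i j, 0 ≤ G i j) ∧ G * F = F' ∧
      G *ᵥ H ≤ (1 / β) • H' + F' *ᵥ (-(1 / β) • t) := by
  have hrow : ∀ i, ∃ g : κ → ℝ, 0 ≤ g ∧ g ᵥ* F = F' i ∧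
      g ⬝ᵥ H ≤ (H' i - (F' *ᵥ t) i) / β := by
    refine fun i => exists_nonneg_vecMul_eq_dotProduct_le hne fun U hU => ?_
    have := hsub ⟨U, hU, rfl⟩ i
    simp only [mulVec_add, mulVec_smul, Pi.add_apply, Pi.smul_apply, smul_eq_mul] at this
    rw [le_div_iff₀ hβ]
    change (F' *ᵥ U) i * β ≤ _
    linarith
  choose g hg hgF hgH using hrow
  refine ⟨of g, fun i => hg i, ext fun i j => congrFun (hgF i) j, fun i => (hgH i).trans_eq ?_⟩
  simp only [mulVec_smul, Pi.add_apply, Pi.smul_apply, smul_eq_mul]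
  ring

end Matrix

/-- Theorem 1 of the paper (inner approximation part): if `(s*, r*, G*)` is an optimal
solution of the linear program
  minimize s subject to s > 0, G ≥ 0, G F = F', G H ≤ s H' + F' r,
then `β* = 1/s*`, `t* = -r*/s*` give the maximum inner homothetic approximation of
`P = {U | F' U ≤ H'}` by `P₀ = {U | F U ≤ H}`: `β* P₀ + t* ⊆ P`, and `β ≤ β*` for all
`β > 0`, `t` with `β P₀ + t ⊆ P`. -/
theorem optimal_LP_solution_gives_maximum_inner_approximation
    (p q m : ℕ) (F : Matrix (Fin p) (Fin m) ℝ) (H : Fin p → ℝ)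
    (F' : Matrix (Fin q) (Fin m) ℝ) (H' : Fin q → ℝ)
    (hne : ({U : Fin m → ℝ | F.mulVec U ≤ H}).Nonempty)
    (sStar : ℝ) (rStar : Fin m → ℝ) (GStar : Matrix (Fin q) (Fin p) ℝ)
    (hsStar : 0 < sStar) (hGStar : ∀ i j, 0 ≤ GStar i j)
    (heq : GStar * F = F')
    (hineq : GStar.mulVec H ≤ sStar • H' + F'.mulVec rStar)
    (hopt : ∀ (s : ℝ) (r : Fin m → ℝ) (G : Matrix (Fin q) (Fin p) ℝ),
      0 < s → (∀ i j, 0 ≤ G i j) → G * F = F' →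
      G.mulVec H ≤ s • H' + F'.mulVec r → sStar ≤ s) :
    ((fun ξ => (1 / sStar) • ξ + (-(1 / sStar) • rStar)) ''
        {U : Fin m → ℝ | F.mulVec U ≤ H} ⊆ {U : Fin m → ℝ | F'.mulVec U ≤ H'}) ∧
      ∀ (β : ℝ) (t : Fin m → ℝ), 0 < β →
        (fun ξ => β • ξ + t) '' {U : Fin m → ℝ | F.mulVec U ≤ H}
          ⊆ {U : Fin m → ℝ | F'.mulVec U ≤ H'} →
        β ≤ 1 / sStar := by
  refine ⟨Matrix.image_smul_add_subset_of_certificate hsStar hGStar heq hineq,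
    fun β t hβ hsub => ?_⟩
  obtain ⟨G, hG, hGF, hGH⟩ := Matrix.exists_certificate_of_image_smul_add_subset hne hβ hsub
  have hsβ := hopt _ _ G (by positivity) hG hGF hGH
  rwa [le_div_iff₀ hsStar, mul_comm, ← le_div_iff₀ hβ]
end

section
/- Let B₀ ⊆ ℝ^m be a set, and for i = 1, …, N let P^i ⊆ ℝ^m, β^i > 0, and t^i ∈ ℝ^m be such that β^i B₀ + t^i ⊆ P^i. Set β = Σ_{i=1}^N β^i and t = Σ_{i=1}^N t^i. Then for every U ∈ β B₀ + t, the vectors U^i := (β^i/β)(U − t) + t^i satisfy U^i ∈ P^i for every i, and Σ_{i=1}^N U^i = U. That is, every point of the homothet β B₀ + t admits an explicit decomposition into admissible individual components. -/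
open Finset

/-- If the sum of the nonnegative weights vanishes, so does every weight, which makes the
identity hold even where `w i / ∑ j, w j` is the junk value `w i / 0 = 0`. -/
theorem div_sum_smul_sum_smul {ι 𝕜 E : Type*} [Fintype ι] [Field 𝕜] [LinearOrder 𝕜]
    [IsStrictOrderedRing 𝕜] [AddCommGroup E] [Module 𝕜 E] {w : ι → 𝕜} (hw : ∀ i, 0 ≤ w i)
    (i : ι) (x : E) : (w i / ∑ j, w j) • ((∑ j, w j) • x) = w i • x := by
  rcases (sum_nonneg fun j _ => hw j).eq_or_lt with hzero | hpos
  · have hwi : w i = 0 := (sum_eq_zero_iff_of_nonneg fun j _ => hw j).1 hzero.symm i (mem_univ i)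
    simp [hwi]
  · rw [smul_smul, div_mul_cancel₀ _ hpos.ne']

theorem homothet_member_decomposition_general
    (m N : ℕ) (B₀ : Set (Fin m → ℝ))
    (P : Fin N → Set (Fin m → ℝ)) (β : Fin N → ℝ) (t : Fin N → Fin m → ℝ)
    (hβ : ∀ i, 0 < β i)
    (h : ∀ i, (fun ξ => β i • ξ + t i) '' B₀ ⊆ P i)
    (U : Fin m → ℝ)
    (hU : U ∈ (fun ξ => (∑ i, β i) • ξ + ∑ i, t i) '' B₀) :
    (∀ i, (β i / ∑ j, β j) • (U - ∑ j, t j) + t i ∈ P i) ∧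
      ∑ i, ((β i / ∑ j, β j) • (U - ∑ j, t j) + t i) = U := by
  obtain ⟨ξ, hξ, rfl⟩ := hU
  have hcomponent : ∀ i, (β i / ∑ j, β j) • ((∑ j, β j) • ξ + ∑ j, t j - ∑ j, t j) + t i
      = β i • ξ + t i := fun i => by
    rw [add_sub_cancel_right, div_sum_smul_sum_smul (fun j => (hβ j).le)]
  refine ⟨fun i => hcomponent i ▸ h i ⟨ξ, hξ, rfl⟩, ?_⟩
  rw [sum_congr rfl fun i _ => hcomponent i, sum_add_distrib, ← sum_smul]

/-- Power-profile decomposition (equation (13) of Theorem 2): if `βⁱ B₀ + tⁱ ⊆ Pⁱ`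
with `βⁱ > 0` for `i = 1, …, N`, `β = Σᵢ βⁱ`, `t = Σᵢ tⁱ`, then every
`U ∈ β B₀ + t` decomposes as `U = Σᵢ Uⁱ` with `Uⁱ = (βⁱ/β)(U - t) + tⁱ ∈ Pⁱ`. -/
theorem homothet_member_decomposition
    (m N : ℕ) (hN : 0 < N) (B₀ : Set (Fin m → ℝ))
    (P : Fin N → Set (Fin m → ℝ)) (β : Fin N → ℝ) (t : Fin N → Fin m → ℝ)
    (hβ : ∀ i, 0 < β i)
    (h : ∀ i, (fun ξ => β i • ξ + t i) '' B₀ ⊆ P i)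
    (U : Fin m → ℝ)
    (hU : U ∈ (fun ξ => (∑ i, β i) • ξ + ∑ i, t i) '' B₀) :
    (∀ i, (β i / ∑ j, β j) • (U - ∑ j, t j) + t i ∈ P i) ∧
      ∑ i, ((β i / ∑ j, β j) • (U - ∑ j, t j) + t i) = U :=
  homothet_member_decomposition_general m N B₀ P β t hβ h U hU
end

section
/- Let X₀ ⊆ ℝ^m be a convex set. For i = 1, …, N let X^i ⊆ ℝ^m, β^i > 0, and t^i ∈ ℝ^m satisfy β^i X₀ + t^i ⊆ X^i, and let U^i = {U ∈ ℝ^m : −u^i ≤ U ≤ ū^i} with u^i, ū^i ∈ ℝ^m (inequalities entrywise). Define u, ū ∈ ℝ^m componentwise by u(k) = min_i (u^i(k) + t^i(k))/β^i and ū(k) = min_i (ū^i(k) − t^i(k))/β^i, and set U₀ = {U ∈ ℝ^m : −u ≤ U ≤ ū}, β = Σ_{i=1}^N β^i, t = Σ_{i=1}^N t^i. Then β (X₀ ∩ U₀) + t ⊆ Σ_{i=1}^N (X^i ∩ U^i), where the right-hand side is the Minkowski sum of the sets X^i ∩ U^i. -/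
open Pointwise

/-
Fix ξ in `X₀ ∩ U₀` and split `β ξ + t = Σᵢ (βⁱ ξ + tⁱ)`. Each summand lies in `Xⁱ` by hypothesis,
and in the box `Uⁱ` because the bounds of `U₀` are minima over `i`, so in particular
`-(uⁱ + tⁱ)/βⁱ ≤ ξ ≤ (ūⁱ - tⁱ)/βⁱ`, which rescales to `-uⁱ ≤ βⁱ ξ + tⁱ ≤ ūⁱ`.
-/

section AffineBounds

variable {α : Type*} [Field α] [LinearOrder α] [IsStrictOrderedRing α] {a b c x : α}

lemma neg_le_mul_add_of_neg_div_le (hb : 0 < b) (h : -((a + c) / b) ≤ x) : -a ≤ b * x + c := by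
  rw [← neg_div, div_le_iff₀ hb] at h
  linarith

lemma mul_add_le_of_le_div (hb : 0 < b) (h : x ≤ (a - c) / b) : b * x + c ≤ a := by
  rw [le_div_iff₀ hb] at h
  linarith

lemma smul_add_mem_box {ι : Type*} {lo hi c ξ : ι → α} (hb : 0 < b)
    (hlo : ∀ k, -((lo k + c k) / b) ≤ ξ k) (hhi : ∀ k, ξ k ≤ (hi k - c k) / b) :
    -lo ≤ b • ξ + c ∧ b • ξ + c ≤ hi :=
  ⟨fun k => neg_le_mul_add_of_neg_div_le hb (hlo k), fun k => mul_add_le_of_le_div hb (hhi k)⟩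

end AffineBounds

theorem suboptimal_sufficient_battery_general
    (m N : ℕ) (X₀ : Set (Fin m → ℝ))
    (X : Fin N → Set (Fin m → ℝ)) (β : Fin N → ℝ) (t : Fin N → Fin m → ℝ)
    (hβ : ∀ i, 0 < β i)
    (hX : ∀ i, (fun ξ => β i • ξ + t i) '' X₀ ⊆ X i)
    (ulo uhi : Fin N → Fin m → ℝ) :
    (fun ξ => (∑ i, β i) • ξ + ∑ i, t i) ''
        (X₀ ∩ {U : Fin m → ℝ |
          (fun k => -⨅ i, (ulo i k + t i k) / β i) ≤ U ∧
          U ≤ fun k => ⨅ i, (uhi i k - t i k) / β i})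
      ⊆ ∑ i, (X i ∩ {U : Fin m → ℝ | -ulo i ≤ U ∧ U ≤ uhi i}) := by
  rintro _ ⟨ξ, ⟨hξ, hlo, hhi⟩, rfl⟩
  have hsplit : (∑ i, β i) • ξ + ∑ i, t i = ∑ i, (β i • ξ + t i) := by
    rw [Finset.sum_add_distrib, Finset.sum_smul]
  beta_reduce
  rw [hsplit]
  refine Set.finsetSum_mem_finsetSum _ _ _ fun i _ =>
    ⟨hX i ⟨ξ, hξ, rfl⟩, smul_add_mem_box (hβ i) (fun k => ?_) (fun k => ?_)⟩
  · exact (neg_le_neg (ciInf_le (Finite.bddBelow_range _) i)).trans (hlo k)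
  · exact (hhi k).trans (ciInf_le (Finite.bddBelow_range _) i)

/-- Theorem 3 of the paper (suboptimal sufficient virtual battery): if
`βⁱ X₀ + tⁱ ⊆ Xⁱ` with `X₀` convex and `βⁱ > 0`, `Uⁱ = {U | -uⁱ ≤ U ≤ ūⁱ}`, and
`U₀ = {U | -u ≤ U ≤ ū}` with `u(k) = minᵢ (uⁱ(k)+tⁱ(k))/βⁱ`,
`ū(k) = minᵢ (ūⁱ(k)-tⁱ(k))/βⁱ`, then `β (X₀ ∩ U₀) + t ⊆ Σᵢ (Xⁱ ∩ Uⁱ)`, where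
`β = Σᵢ βⁱ`, `t = Σᵢ tⁱ`, and the right-hand side is a Minkowski sum. -/
theorem suboptimal_sufficient_battery
    (m N : ℕ) (hN : 0 < N) (X₀ : Set (Fin m → ℝ)) (hX₀ : Convex ℝ X₀)
    (X : Fin N → Set (Fin m → ℝ)) (β : Fin N → ℝ) (t : Fin N → Fin m → ℝ)
    (hβ : ∀ i, 0 < β i)
    (hX : ∀ i, (fun ξ => β i • ξ + t i) '' X₀ ⊆ X i)
    (ulo uhi : Fin N → Fin m → ℝ) :
    (fun ξ => (∑ i, β i) • ξ + ∑ i, t i) ''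
        (X₀ ∩ {U : Fin m → ℝ |
          (fun k => -⨅ i, (ulo i k + t i k) / β i) ≤ U ∧
          U ≤ fun k => ⨅ i, (uhi i k - t i k) / β i})
      ⊆ ∑ i, (X i ∩ {U : Fin m → ℝ | -ulo i ≤ U ∧ U ≤ uhi i}) :=
  suboptimal_sufficient_battery_general m N X₀ X β t hβ hX ulo uhi
end
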